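/- Let 1 ≤ p < ∞, let ν be a finite positive Borel measure on [−π, 0], and let u : [0,π] × [0,π] → ℝ be continuous with u(0, s) = 0 for every s ∈ [0,π]. Then ∫₀^π ( ∫₀^π ∫_{[−π,0]} |u(max(0, t + r), s)| dν(r) ds )^p dt ≤ π^{p−1} · (ν([−π,0]))^p · ∫₀^π ∫₀^π |u(t,s)|^p ds dt. -/

import Mathlib

/-!
Pass to `ℝ≥0∞`-valued integrals, where Tonelli applies without integrability side conditions.
For fixed `t`, Hölder's inequality against the constant `1` on the product
`[0,π] × [-π,0]` with measure `volume ⊗ ν` gives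
`(∫∫ F)^p ≤ π^(p-1) ν([-π,0])^(p-1) ∫∫ F^p`. After moving the `t`-integral inside, the
delayed function `t ↦ F(max 0 (t + r), s)` with `r ≤ 0` is a translate of `F(·, s)` cut off
at `0` (using `F(0, s) = 0`), so its `L^p([0,π])` norm is at most that of `F(·, s)`; the
remaining `r`-integral contributes one more factor `ν([-π,0])`.
-/

open MeasureTheory Set
open scoped ENNReal

theorem lintegral_rpow_le_measure_univ_rpow_mul {α : Type*} [MeasurableSpace α]
    (μ : Measure α) {p : ℝ} (hp : 1 ≤ p) {f : α → ℝ≥0∞} (hf : AEMeasurable f μ) :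
    (∫⁻ a, f a ∂μ) ^ p ≤ μ univ ^ (p - 1) * ∫⁻ a, f a ^ p ∂μ := by
  rcases hp.eq_or_lt with rfl | hp
  · simp
  set q := p.conjExponent
  have hpq : p.HolderConjugate q := .conjExponent hp
  have holder : ∫⁻ a, f a ∂μ ≤ (∫⁻ a, f a ^ p ∂μ) ^ (1 / p) * μ univ ^ (1 / q) := by
    simpa using ENNReal.lintegral_mul_le_Lp_mul_Lq μ hpq hf (aemeasurable_const (b := 1))
  calc (∫⁻ a, f a ∂μ) ^ p
      ≤ ((∫⁻ a, f a ^ p ∂μ) ^ (1 / p) * μ univ ^ (1 / q)) ^ p := by gcongr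
    _ = μ univ ^ (p - 1) * ∫⁻ a, f a ^ p ∂μ := by
      rw [ENNReal.mul_rpow_of_nonneg _ _ hpq.nonneg, ← ENNReal.rpow_mul, ← ENNReal.rpow_mul,
        one_div_mul_cancel hpq.ne_zero, ENNReal.rpow_one, one_div_mul_eq_div,
        hpq.div_conj_eq_sub_one, mul_comm]

theorem lintegral_lintegral_rpow_le {β γ : Type*} [MeasurableSpace β] [MeasurableSpace γ]
    (μ : Measure β) (ν : Measure γ) [SFinite ν] {p : ℝ} (hp : 1 ≤ p) {G : β → γ → ℝ≥0∞}
    (hG : Measurable (Function.uncurry G)) :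
    (∫⁻ s, ∫⁻ r, G s r ∂ν ∂μ) ^ p
      ≤ μ univ ^ (p - 1) * ν univ ^ (p - 1) * ∫⁻ s, ∫⁻ r, G s r ^ p ∂ν ∂μ := by
  have h := lintegral_rpow_le_measure_univ_rpow_mul (μ.prod ν) hp hG.aemeasurable
  rwa [lintegral_prod _ hG.aemeasurable, lintegral_prod _ (hG.pow_const p).aemeasurable,
    ← univ_prod_univ, Measure.prod_prod, ENNReal.mul_rpow_of_nonneg _ _ (by linarith)] at h

theorem lintegral_Icc_comp_max_zero_add_le {f : ℝ → ℝ≥0∞} (hf0 : f 0 = 0) (a : ℝ) {r : ℝ}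
    (hr : r ≤ 0) : ∫⁻ t in Icc 0 a, f (max 0 (t + r)) ≤ ∫⁻ t in Icc 0 a, f t := by
  have hf : ∀ x, f (max 0 x) = (Ici 0).indicator f x := by
    intro x
    rcases le_or_gt 0 x with hx | hx
    · simp [hx]
    · simp [hx.le, hx.not_ge, hf0]
  calc ∫⁻ t in Icc 0 a, f (max 0 (t + r))
      = ∫⁻ x in (· + r) '' Icc 0 a, (Ici 0).indicator f x := by
        simp only [hf]
        exact (measurePreserving_add_right volume r).setLIntegral_comp_emb
          (measurableEmbedding_addRight r) _ _
    _ = ∫⁻ x in Icc r (a + r) ∩ Ici 0, f x := by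
        rw [image_add_const_Icc, zero_add, lintegral_indicator measurableSet_Ici,
          Measure.restrict_restrict measurableSet_Ici, inter_comm]
    _ ≤ ∫⁻ x in Icc 0 a, f x := lintegral_mono_set fun x hx => ⟨hx.2, by linarith [hx.1.2]⟩

theorem lintegral_Icc_rpow_lintegral_lintegral_max_zero_add_le {β : Type*} [MeasurableSpace β]
    (μ : Measure β) [SFinite μ] (ν : Measure ℝ) [SFinite ν] {p : ℝ} (hp : 1 ≤ p) (a : ℝ)
    {S : Set ℝ} (hS : MeasurableSet S) (hS0 : S ⊆ Iic 0) {F : ℝ → β → ℝ≥0∞}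
    (hF : Measurable (Function.uncurry F)) (hF0 : ∀ᵐ s ∂μ, F 0 s = 0) :
    ∫⁻ t in Icc 0 a, (∫⁻ s, ∫⁻ r in S, F (max 0 (t + r)) s ∂ν ∂μ) ^ p
      ≤ μ univ ^ (p - 1) * ν S ^ p * ∫⁻ t in Icc 0 a, ∫⁻ s, F t s ^ p ∂μ := by
  set C := μ univ ^ (p - 1) * ν S ^ (p - 1)
  have hG : Measurable fun x : (ℝ × β) × ℝ => F (max 0 (x.1.1 + x.2)) x.1.2 ^ p :=
    (hF.comp (f := fun x : (ℝ × β) × ℝ => (max 0 (x.1.1 + x.2), x.1.2)) (by fun_prop)).pow_const _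
  calc ∫⁻ t in Icc 0 a, (∫⁻ s, ∫⁻ r in S, F (max 0 (t + r)) s ∂ν ∂μ) ^ p
      ≤ ∫⁻ t in Icc 0 a, C * ∫⁻ s, ∫⁻ r in S, F (max 0 (t + r)) s ^ p ∂ν ∂μ := by
        refine lintegral_mono fun t => ?_
        simpa only [Measure.restrict_apply_univ] using
          lintegral_lintegral_rpow_le μ (ν.restrict S) hp (G := fun s r => F (max 0 (t + r)) s)
            (hF.comp (f := fun x : β × ℝ => (max 0 (t + x.2), x.1)) (by fun_prop))
    _ = C * ∫⁻ s, ∫⁻ r in S, (∫⁻ t in Icc 0 a, F (max 0 (t + r)) s ^ p) ∂ν ∂μ := by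
        have hG₁ : Measurable fun x : ℝ × β => ∫⁻ r in S, F (max 0 (x.1 + r)) x.2 ^ p ∂ν :=
          hG.lintegral_prod_right'
        rw [lintegral_const_mul _ hG₁.lintegral_prod_right',
          lintegral_lintegral_swap hG₁.aemeasurable]
        congr 1
        refine lintegral_congr fun s => lintegral_lintegral_swap ?_
        exact (hG.comp (f := fun x : ℝ × ℝ => ((x.1, s), x.2)) (by fun_prop)).aemeasurable
    _ ≤ C * ∫⁻ s, ∫⁻ r in S, (∫⁻ t in Icc 0 a, F t s ^ p) ∂ν ∂μ := by
        gcongr C * ?_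
        refine lintegral_mono_ae (hF0.mono fun s hs => setLIntegral_mono' hS fun r hr => ?_)
        refine lintegral_Icc_comp_max_zero_add_le (f := fun x => F x s ^ p) ?_ a (hS0 hr)
        simp [hs, ENNReal.zero_rpow_of_pos (by linarith : (0 : ℝ) < p)]
    _ = μ univ ^ (p - 1) * ν S ^ p * ∫⁻ t in Icc 0 a, ∫⁻ s, F t s ^ p ∂μ := by
        have hFp : Measurable fun x : β × ℝ => F x.2 x.1 ^ p :=
          (hF.comp (f := fun x : β × ℝ => (x.2, x.1)) (by fun_prop)).pow_const p
        have hνS : ν S ^ p = ν S ^ (p - 1) * ν S := by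
          simpa using ENNReal.rpow_add_of_nonneg (x := ν S) (p - 1) 1 (by linarith) zero_le_one
        simp only [setLIntegral_const]
        rw [lintegral_mul_const _ hFp.lintegral_prod_right',
          lintegral_lintegral_swap hFp.aemeasurable, hνS]
        ring

theorem ofReal_integral_rpow_integral_integral_le {α β γ : Type*} [MeasurableSpace α]
    [MeasurableSpace β] [MeasurableSpace γ] (μ : Measure α) (μ' : Measure β) (ν : Measure γ)
    {p : ℝ} (hp : 0 ≤ p) (f : α → β → γ → ℝ) :
    ENNReal.ofReal (∫ t, (∫ s, ∫ r, |f t s r| ∂ν ∂μ') ^ p ∂μ)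
      ≤ ∫⁻ t, (∫⁻ s, ∫⁻ r, ‖f t s r‖ₑ ∂ν ∂μ') ^ p ∂μ := by
  calc ENNReal.ofReal (∫ t, (∫ s, ∫ r, |f t s r| ∂ν ∂μ') ^ p ∂μ)
      ≤ ∫⁻ t, ‖(∫ s, ∫ r, |f t s r| ∂ν ∂μ') ^ p‖ₑ ∂μ :=
        (Real.ofReal_le_enorm _).trans (enorm_integral_le_lintegral_enorm _)
    _ = ∫⁻ t, ‖∫ s, ∫ r, |f t s r| ∂ν ∂μ'‖ₑ ^ p ∂μ := by
        refine lintegral_congr fun t => Real.enorm_rpow_of_nonneg ?_ hp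
        exact integral_nonneg fun s => integral_nonneg fun r => abs_nonneg _
    _ ≤ ∫⁻ t, (∫⁻ s, ∫⁻ r, ‖f t s r‖ₑ ∂ν ∂μ') ^ p ∂μ := by
        gcongr with t
        refine (enorm_integral_le_lintegral_enorm _).trans (lintegral_mono fun s => ?_)
        simpa using enorm_integral_le_lintegral_enorm (μ := ν) fun r => |f t s r|

theorem ContinuousOn.exists_continuous_uncurry_eqOn_Icc_prod {a b c d : ℝ} (hab : a ≤ b)
    (hcd : c ≤ d) {u : ℝ → ℝ → ℝ} (hu : ContinuousOn (Function.uncurry u) (Icc a b ×ˢ Icc c d)) :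
    ∃ w : ℝ → ℝ → ℝ, Continuous (Function.uncurry w) ∧
      ∀ t ∈ Icc a b, ∀ s ∈ Icc c d, w t s = u t s := by
  refine ⟨fun t s => u (projIcc a b hab t) (projIcc c d hcd s), ?_, fun t ht s hs => ?_⟩
  · exact hu.comp_continuous
      (f := fun z : ℝ × ℝ => ((projIcc a b hab z.1 : ℝ), (projIcc c d hcd z.2 : ℝ)))
      (by fun_prop) fun z => ⟨(projIcc a b hab z.1).2, (projIcc c d hcd z.2).2⟩
  · simp [projIcc_of_mem hab ht, projIcc_of_mem hcd hs]

theorem ofReal_setIntegral_setIntegral_rpow_abs {s t : Set ℝ} (hs : IsCompact s)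
    (ht : IsCompact t) {u : ℝ → ℝ → ℝ} (hu : ContinuousOn (Function.uncurry u) (s ×ˢ t))
    {p : ℝ} (hp : 0 ≤ p) :
    ENNReal.ofReal (∫ x in s, ∫ y in t, |u x y| ^ p) = ∫⁻ x in s, ∫⁻ y in t, ‖u x y‖ₑ ^ p := by
  have hint : IntegrableOn (fun z : ℝ × ℝ => |u z.1 z.2| ^ p) (s ×ˢ t) (volume.prod volume) :=
    ((continuous_abs.comp_continuousOn hu).rpow_const fun _ _ => Or.inr hp).integrableOn_compact
      (hs.prod ht)
  rw [← setIntegral_prod _ hint, ofReal_integral_eq_lintegral_ofReal hint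
    (.of_forall fun _ => by positivity), setLIntegral_prod _ hint.aemeasurable.ennreal_ofReal]
  simp only [← ENNReal.ofReal_rpow_of_nonneg (abs_nonneg _) hp, Real.enorm_eq_ofReal_abs]

/-- **Joint `p`-admissibility of the pair `(K_D, φ)` for the nilpotent left shift.**
Let `1 ≤ p < ∞`, let `ν` be a finite positive Borel measure on `[-π,0]`, and let
`u : [0,π] × [0,π] → ℝ` be continuous with `u(0,s) = 0` for all `s ∈ [0,π]`.  Then
`∫₀^π (∫₀^π ∫_{[-π,0]} |u(max(0,t+r),s)| dν(r) ds)^p dt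
  ≤ π^{p-1} ν([-π,0])^p ∫₀^π ∫₀^π |u(t,s)|^p ds dt`. -/
theorem stmt_17 (p : ℝ) (hp : 1 ≤ p) (ν : Measure ℝ) [IsFiniteMeasure ν]
    (u : ℝ → ℝ → ℝ)
    (hu : ContinuousOn (Function.uncurry u) (Set.Icc 0 Real.pi ×ˢ Set.Icc 0 Real.pi))
    (hu0 : ∀ s ∈ Set.Icc (0 : ℝ) Real.pi, u 0 s = 0) :
    ∫ t in Set.Icc (0 : ℝ) Real.pi,
        (∫ s in Set.Icc (0 : ℝ) Real.pi,
            ∫ r in Set.Icc (-Real.pi) (0 : ℝ), |u (max 0 (t + r)) s| ∂ν) ^ p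
      ≤ Real.pi ^ (p - 1) * (ν (Set.Icc (-Real.pi) 0)).toReal ^ p *
          ∫ t in Set.Icc (0 : ℝ) Real.pi,
            ∫ s in Set.Icc (0 : ℝ) Real.pi, |u t s| ^ p := by
  have hπ : 0 ≤ Real.pi := Real.pi_pos.le
  set A := Icc 0 Real.pi
  set R := Icc (-Real.pi) 0
  -- a continuous extension of `u` to `ℝ²` makes the delayed integrand jointly measurable
  obtain ⟨w, hw, hwu⟩ := hu.exists_continuous_uncurry_eqOn_Icc_prod hπ hπ
  have hw0 : ∀ᵐ s ∂volume.restrict A, ‖w 0 s‖ₑ = 0 := ae_restrict_of_forall_mem measurableSet_Icc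
    fun s hs => by simp [hwu 0 ⟨le_rfl, hπ⟩ s hs, hu0 s hs]
  have key := lintegral_Icc_rpow_lintegral_lintegral_max_zero_add_le (volume.restrict A) ν hp
    Real.pi (S := R) measurableSet_Icc (fun r hr => hr.2) (F := fun t s => ‖w t s‖ₑ)
    hw.enorm.measurable hw0
  rw [Measure.restrict_apply_univ, Real.volume_Icc, sub_zero] at key
  rw [← ENNReal.ofReal_le_ofReal_iff (by positivity), ENNReal.ofReal_mul (by positivity),
    ENNReal.ofReal_mul (by positivity), ← ENNReal.ofReal_rpow_of_nonneg hπ (by linarith),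
    ← ENNReal.ofReal_rpow_of_nonneg ENNReal.toReal_nonneg (by linarith),
    ENNReal.ofReal_toReal (measure_ne_top _ _),
    ofReal_setIntegral_setIntegral_rpow_abs isCompact_Icc isCompact_Icc hu (by linarith)]
  calc _ ≤ ∫⁻ t in A, (∫⁻ s in A, ∫⁻ r in R, ‖u (max 0 (t + r)) s‖ₑ ∂ν) ^ p :=
        ofReal_integral_rpow_integral_integral_le _ _ _ (by linarith) _
    _ = ∫⁻ t in A, (∫⁻ s in A, ∫⁻ r in R, ‖w (max 0 (t + r)) s‖ₑ ∂ν) ^ p := by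
        refine setLIntegral_congr_fun measurableSet_Icc fun t ht => ?_
        congr 1
        refine setLIntegral_congr_fun measurableSet_Icc fun s hs => ?_
        refine setLIntegral_congr_fun measurableSet_Icc fun r hr => ?_
        rw [hwu _ ⟨le_max_left _ _, max_le hπ (by linarith [ht.2, hr.2])⟩ _ hs]
    _ ≤ _ := key
    _ = _ := by
        refine congrArg _ (setLIntegral_congr_fun measurableSet_Icc fun t ht => ?_)
        exact setLIntegral_congr_fun measurableSet_Icc fun s hs => by rw [hwu t ht s hs]
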